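/- arXiv:1005.1369 — 2 statements merged into one kernel-verified Lean document; each statement's English description precedes it below -/
import Mathlib

section
/- Let Σ = {σ_0, σ_1, σ_2} be an alphabet of three letters, let G_1 be the graph on Σ with edge set {σ_0σ_1, σ_0σ_2} (user 1 only distinguishes between σ_1 and σ_2), and let G_2 be any graph on Σ other than the complete graph. Then for every α ∈ [0,1] the rate vector (α, (1−α)·log₂ c(G_2)) is optimal (note log₂ c(G_1) = 1). -/
/-- Two strings of length `n` over the alphabet are distinguishable for a user with
confusion graph `G` if they differ at some coordinate at two non-adjacent letters. -/
def Distinguishable {V : Type*} (G : SimpleGraph V) {n : ℕ} (x y : Fin n → V) : Prop :=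
  ∃ t : Fin n, x t ≠ y t ∧ ¬ G.Adj (x t) (y t)

/-- `alphaN G n` is the largest size of a family of strings in `V^n` that are pairwise
distinguishable (the independence number of the `n`-fold strong product of `G`). -/
noncomputable def alphaN {V : Type*} [Fintype V] (G : SimpleGraph V) (n : ℕ) : ℕ :=
  sSup {N : ℕ | ∃ S : Finset (Fin n → V), S.card = N ∧
    ∀ x ∈ S, ∀ y ∈ S, x ≠ y → Distinguishable G x y}

/-- The Shannon capacity of a confusion graph: `c(G) = sup_{n ≥ 1} α_n(G)^{1/n}`. -/
noncomputable def shannonCapacity {V : Type*} [Fintype V] (G : SimpleGraph V) : ℝ :=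
  ⨆ n : ℕ, (alphaN G (n + 1) : ℝ) ^ (((n : ℝ) + 1))⁻¹

/-- `(m 1, …, m r)` is feasible at length `n` for the confusion graphs `G i` if there is an
encoding map `E` such that any two message tuples differing in the `i`-th component get codewords
that are distinguishable for user `i` (so user `i` can decode his own message). -/
def FeasibleAtLength {k r : ℕ} (G : Fin r → SimpleGraph (Fin k)) (m : Fin r → ℕ) (n : ℕ) :
    Prop :=
  ∃ E : (∀ i : Fin r, Fin (m i)) → (Fin n → Fin k),
    ∀ i : Fin r, ∀ a b : (∀ i : Fin r, Fin (m i)), a i ≠ b i →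
      ∃ t : Fin n, E a t ≠ E b t ∧ ¬ (G i).Adj (E a t) (E b t)

/-- A rate vector `R` of nonnegative reals is feasible if there are positive integers `m n i`
with `(m n 1, …, m n r)` feasible at length `n` for every `n` and `log₂ (m n i) / n → R i`. -/
def FeasibleRate {k r : ℕ} (G : Fin r → SimpleGraph (Fin k)) (R : Fin r → ℝ) : Prop :=
  (∀ i, 0 ≤ R i) ∧
  ∃ m : ℕ → Fin r → ℕ,
    (∀ n i, 0 < m n i) ∧
    (∀ n : ℕ, FeasibleAtLength G (m n) n) ∧
    ∀ i, Filter.Tendsto (fun n : ℕ => Real.logb 2 (m n i) / n) Filter.atTop (nhds (R i))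

/-- A feasible rate vector for two users is optimal if no user can increase his rate while
the other maintains the same rate. -/
def OptimalRate {k : ℕ} (G : Fin 2 → SimpleGraph (Fin k)) (R : Fin 2 → ℝ) : Prop :=
  FeasibleRate G R ∧
  (¬ ∃ R1' : ℝ, R 0 < R1' ∧ FeasibleRate G ![R1', R 1]) ∧
  (¬ ∃ R2' : ℝ, R 1 < R2' ∧ FeasibleRate G ![R 0, R2'])

/-!
User 1 reads the letters `σ₁, σ₂` as the bits `0, 1` and cannot tell `σ₀` from either, so a
string `x` stands for the subcube `cube x` of `{0,1}ⁿ` (with `σ₀` a free coordinate), and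
codewords carrying different messages of user 1 have disjoint cubes. Hence if, for every message
of user 1, the `m₂` codewords of user 2 cover at least `m₂ ^ K` binary strings, then
`m₁ * m₂ ^ K ≤ 2ⁿ`, i.e. `R₁ + K R₂ ≤ 1` for every feasible rate vector.

If `G₂` has an edge, its letters split into two cliques, and an induction on `n` along the first
letter gives `K = 1`. If `G₂` is empty, a set `D` of binary strings contains at most
`|D| ^ log₂ 3` subcubes, so `K = log₃ 2`. In both cases `K * log₂ c(G₂) = 1`, and time sharing
between the independent code `{σ₁, σ₂}` of user 1 and an independent set of `G₂` of size `c(G₂)`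
attains the line `R₁ + K R₂ = 1`; every point on it is optimal.
-/

open Finset Filter Function

section Tails
variable {α : Type*} [Fintype α] [DecidableEq α] {n : ℕ}

def tails (S : Finset (Fin (n + 1) → α)) (a : α) : Finset (Fin n → α) :=
  univ.filter fun x => Fin.cons a x ∈ S

@[simp] lemma mem_tails {S : Finset (Fin (n + 1) → α)} {a : α} {x : Fin n → α} :
    x ∈ tails S a ↔ Fin.cons a x ∈ S := by
  simp [tails]

lemma card_eq_sum_card_tails (S : Finset (Fin (n + 1) → α)) : #S = ∑ a, #(tails S a) := by
  rw [card_eq_sum_card_fiberwise (f := fun x => x 0) (t := univ) fun _ _ => mem_univ _]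
  refine sum_congr rfl fun a _ => card_nbij' Fin.tail (fun x => (Fin.cons a x : Fin (n + 1) → α))
    ?_ ?_ ?_ ?_
  · intro x hx
    obtain ⟨hx, rfl⟩ := mem_filter.1 hx
    simpa using hx
  · intro x hx
    simpa using hx
  · intro x hx
    rw [← (mem_filter.1 hx).2]
    exact Fin.cons_self_tail x
  · intro x _
    exact Fin.tail_cons _ _

end Tails

section Distinguishable
variable {V : Type*} {G : SimpleGraph V} {n : ℕ}

lemma Distinguishable.ne {x y : Fin n → V} (h : Distinguishable G x y) : x ≠ y := by
  rintro rfl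
  obtain ⟨t, ht, -⟩ := h
  exact ht rfl

lemma Distinguishable.tail {M : Set V} (hM : G.IsClique M) {x y : Fin (n + 1) → V}
    (h : Distinguishable G x y) (hx : x 0 ∈ M) (hy : y 0 ∈ M) :
    Distinguishable G (Fin.tail x) (Fin.tail y) := by
  obtain ⟨t, hne, hnadj⟩ := h
  rcases Fin.eq_zero_or_eq_succ t with rfl | ⟨s, rfl⟩
  · exact absurd (hM hx hy hne) hnadj
  · exact ⟨s, hne, hnadj⟩

lemma distinguishable_comp {q : ℕ} {ι : Fin q → V} (hι : Injective ι)
    (hind : G.IsIndepSet (Set.range ι)) {f g : Fin n → Fin q} (hfg : f ≠ g) :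
    Distinguishable G (ι ∘ f) (ι ∘ g) := by
  obtain ⟨t, ht⟩ := Function.ne_iff.1 hfg
  exact ⟨t, hι.ne ht, hind (Set.mem_range_self _) (Set.mem_range_self _) (hι.ne ht)⟩

end Distinguishable

section Capacity
variable {V : Type*} [Fintype V] {G : SimpleGraph V} {q : ℕ}

lemma alphaN_eq_pow {ι : Fin q → V} (hι : Injective ι) (hind : G.IsIndepSet (Set.range ι))
    (hle : ∀ n (S : Finset (Fin n → V)), (S : Set (Fin n → V)).Pairwise (Distinguishable G) →
      #S ≤ q ^ n) (n : ℕ) :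
    alphaN G n = q ^ n := by
  classical
  refine IsGreatest.csSup_eq ⟨⟨univ.image fun f : Fin n → Fin q => ι ∘ f, ?_, ?_⟩, ?_⟩
  · rw [card_image_of_injective _ (hι.comp_left (α := Fin n))]
    simp
  · simp only [mem_image, mem_univ, true_and]
    rintro _ ⟨f, rfl⟩ _ ⟨g, rfl⟩ hfg
    exact distinguishable_comp hι hind fun h => hfg (h ▸ rfl)
  · rintro N ⟨S, rfl, hS⟩
    exact hle n S fun x hx y hy => hS x hx y hy

lemma shannonCapacity_eq_of_alphaN_eq_pow (h : ∀ n, alphaN G n = q ^ n) :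
    shannonCapacity G = q := by
  have hterm (n : ℕ) : (alphaN G (n + 1) : ℝ) ^ ((n : ℝ) + 1)⁻¹ = q := by
    rw [h, Nat.cast_pow, ← Nat.cast_succ]
    exact Real.pow_rpow_inv_natCast q.cast_nonneg n.succ_ne_zero
  simp only [shannonCapacity, hterm, ciSup_const]

lemma card_le_pow_of_rpow_le {N n : ℕ} {K : ℝ} (hq : 0 < q) (hK : 0 < K)
    (hKq : K * Real.logb 2 q = 1) (h : (N : ℝ) ^ K ≤ 2 ^ n) : N ≤ q ^ n := by
  have hq' : (0 : ℝ) < q := by exact_mod_cast hq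
  have hqK : (q : ℝ) ^ K = 2 := by
    rw [← Real.rpow_logb two_pos (by norm_num) hq', ← Real.rpow_mul zero_le_two, mul_comm, hKq,
      Real.rpow_one]
  rw [← hqK, Real.rpow_pow_comm hq'.le] at h
  exact_mod_cast (Real.rpow_le_rpow_iff (by positivity) (by positivity) hK).1 h

end Capacity

section Rates
variable {k : ℕ} {G : Fin 2 → SimpleGraph (Fin k)}

lemma feasibleAtLength_append {M₁ M₂ n₁ n₂ : ℕ} {c₁ : Fin M₁ → Fin n₁ → Fin k}
    {c₂ : Fin M₂ → Fin n₂ → Fin k} (h₁ : Pairwise fun a b => Distinguishable (G 0) (c₁ a) (c₁ b))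
    (h₂ : Pairwise fun a b => Distinguishable (G 1) (c₂ a) (c₂ b)) :
    FeasibleAtLength G ![M₁, M₂] (n₁ + n₂) := by
  refine ⟨fun a => Fin.append (c₁ (a 0)) (c₂ (a 1)), Fin.forall_fin_two.2 ⟨fun a b hab => ?_,
    fun a b hab => ?_⟩⟩
  · obtain ⟨t, ht⟩ := h₁ hab
    exact ⟨Fin.castAdd n₂ t, by simpa only [Fin.append_left] using ht⟩
  · obtain ⟨t, ht⟩ := h₂ hab
    exact ⟨Fin.natAdd n₁ t, by simpa only [Fin.append_right] using ht⟩

lemma feasibleRate_timeSharing {q₁ q₂ : ℕ} (hq₁ : 0 < q₁) (hq₂ : 0 < q₂)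
    {ι₁ : Fin q₁ → Fin k} (hι₁ : Injective ι₁) (hind₁ : (G 0).IsIndepSet (Set.range ι₁))
    {ι₂ : Fin q₂ → Fin k} (hι₂ : Injective ι₂) (hind₂ : (G 1).IsIndepSet (Set.range ι₂))
    {α : ℝ} (hα : α ∈ Set.Icc (0 : ℝ) 1) :
    FeasibleRate G ![α * Real.logb 2 q₁, (1 - α) * Real.logb 2 q₂] := by
  obtain ⟨hα₀, hα₁⟩ := hα
  have hlog₁ : 0 ≤ Real.logb 2 q₁ := Real.logb_nonneg one_lt_two (by exact_mod_cast hq₁)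
  have hlog₂ : 0 ≤ Real.logb 2 q₂ := Real.logb_nonneg one_lt_two (by exact_mod_cast hq₂)
  have hceil (n : ℕ) : ⌈α * n⌉₊ ≤ n := Nat.ceil_le.2 (by nlinarith [n.cast_nonneg (α := ℝ)])
  have hfrac : Tendsto (fun n : ℕ => (⌈α * n⌉₊ : ℝ) / n) atTop (nhds α) :=
    (tendsto_nat_ceil_mul_div_atTop hα₀).comp tendsto_natCast_atTop_atTop
  refine ⟨?_, fun n => ![q₁ ^ ⌈α * n⌉₊, q₂ ^ (n - ⌈α * n⌉₊)], ?_, fun n => ?_, ?_⟩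
  · simp only [Fin.forall_fin_two, Matrix.cons_val_zero, Matrix.cons_val_one]
    exact ⟨mul_nonneg hα₀ hlog₁, mul_nonneg (by linarith) hlog₂⟩
  · simp only [Fin.forall_fin_two, Matrix.cons_val_zero, Matrix.cons_val_one]
    exact fun n => ⟨pow_pos hq₁ _, pow_pos hq₂ _⟩
  · have h := feasibleAtLength_append (G := G)
      (c₁ := fun a : Fin (q₁ ^ ⌈α * n⌉₊) => ι₁ ∘ finFunctionFinEquiv.symm a)
      (c₂ := fun a : Fin (q₂ ^ (n - ⌈α * n⌉₊)) => ι₂ ∘ finFunctionFinEquiv.symm a)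
      (fun a b hab => distinguishable_comp hι₁ hind₁ (finFunctionFinEquiv.symm.injective.ne hab))
      (fun a b hab => distinguishable_comp hι₂ hind₂ (finFunctionFinEquiv.symm.injective.ne hab))
    rwa [Nat.add_sub_cancel' (hceil n)] at h
  · simp only [Fin.forall_fin_two, Matrix.cons_val_zero, Matrix.cons_val_one]
    constructor
    · refine ((hfrac.mul_const (Real.logb 2 q₁)).congr' ?_)
      filter_upwards with n
      push_cast
      rw [Real.logb_pow]
      ring
    · refine (((tendsto_const_nhds.sub hfrac).mul_const (Real.logb 2 q₂)).congr' ?_)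
      filter_upwards [eventually_ne_atTop 0] with n hn
      rw [Nat.cast_pow, Real.logb_pow, Nat.cast_sub (hceil n)]
      field_simp

lemma FeasibleRate.add_mul_le_one {R : Fin 2 → ℝ} {K : ℝ} (hR : FeasibleRate G R)
    (hbound : ∀ n m, FeasibleAtLength G m n → (m 0 : ℝ) * (m 1 : ℝ) ^ K ≤ 2 ^ n) :
    R 0 + K * R 1 ≤ 1 := by
  obtain ⟨-, m, hpos, hm, hlim⟩ := hR
  refine le_of_tendsto ((hlim 0).add ((hlim 1).const_mul K)) ?_
  filter_upwards [eventually_gt_atTop 0] with n hn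
  have h₀ : (0 : ℝ) < m n 0 := by exact_mod_cast hpos n 0
  have h₁ : (0 : ℝ) < m n 1 := by exact_mod_cast hpos n 1
  have hlog := Real.logb_le_logb_of_le one_lt_two (by positivity) (hbound n (m n) (hm n))
  rw [Real.logb_mul h₀.ne' (Real.rpow_pos_of_pos h₁ K).ne', Real.logb_rpow_eq_mul_logb_of_pos h₁,
    Real.logb_pow, Real.logb_self_eq_one one_lt_two, mul_one] at hlog
  rw [mul_div_assoc', ← add_div, div_le_one (by exact_mod_cast hn)]
  exact hlog

lemma optimalRate_of_add_mul_le_one {R : Fin 2 → ℝ} {K : ℝ} (hK : 0 < K) (hR : FeasibleRate G R)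
    (heq : R 0 + K * R 1 = 1) (hle : ∀ R', FeasibleRate G R' → R' 0 + K * R' 1 ≤ 1) :
    OptimalRate G R := by
  refine ⟨hR, fun ⟨R₀, hlt, hR₀⟩ => ?_, fun ⟨R₁, hlt, hR₁⟩ => ?_⟩
  · have := hle _ hR₀
    simp only [Matrix.cons_val_zero, Matrix.cons_val_one] at this
    linarith
  · have := hle _ hR₁
    simp only [Matrix.cons_val_zero, Matrix.cons_val_one] at this
    nlinarith

end Rates

section Cubes
variable {n : ℕ}

def letterCube : Fin 3 → Finset (Fin 2) := ![univ, {0}, {1}]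

lemma letterCube_nonempty : ∀ a, (letterCube a).Nonempty := by decide

lemma mem_letterCube_or_mem_letterCube :
    ∀ a b, a ≠ b → ∀ c, c ∈ letterCube a ∨ c ∈ letterCube b := by
  decide

def cube (x : Fin n → Fin 3) : Finset (Fin n → Fin 2) :=
  Fintype.piFinset fun t => letterCube (x t)

lemma cube_nonempty (x : Fin n → Fin 3) : (cube x).Nonempty :=
  Fintype.piFinset_nonempty.2 fun _ => letterCube_nonempty _

lemma cons_mem_cube_cons {a : Fin 3} {x : Fin n → Fin 3} {b : Fin 2} {d : Fin n → Fin 2} :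
    (Fin.cons b d : Fin (n + 1) → Fin 2) ∈ cube (Fin.cons a x : Fin (n + 1) → Fin 3) ↔
      b ∈ letterCube a ∧ d ∈ cube x := by
  simp [cube, Fintype.mem_piFinset, Fin.forall_fin_succ]

def headSlice (D : Finset (Fin (n + 1) → Fin 2)) (a : Fin 3) : Finset (Fin n → Fin 2) :=
  univ.filter fun d => ∀ b ∈ letterCube a, Fin.cons b d ∈ D

lemma mem_headSlice {D : Finset (Fin (n + 1) → Fin 2)} {a : Fin 3} {d : Fin n → Fin 2} :
    d ∈ headSlice D a ↔ ∀ b ∈ letterCube a, d ∈ tails D b := by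
  simp [headSlice]

lemma cube_cons_subset_iff {a : Fin 3} {x : Fin n → Fin 3} {D : Finset (Fin (n + 1) → Fin 2)} :
    cube (Fin.cons a x : Fin (n + 1) → Fin 3) ⊆ D ↔ cube x ⊆ headSlice D a := by
  refine ⟨fun h d hd => mem_headSlice.2 fun b hb => mem_tails.2 (h (cons_mem_cube_cons.2 ⟨hb, hd⟩)),
    fun h e he => ?_⟩
  rw [← Fin.cons_self_tail e] at he ⊢
  obtain ⟨he₀, he'⟩ := cons_mem_cube_cons.1 he
  exact mem_tails.1 (mem_headSlice.1 (h he') _ he₀)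

lemma headSlice_zero_subset (D : Finset (Fin (n + 1) → Fin 2)) (a : Fin 3) :
    headSlice D 0 ⊆ headSlice D a :=
  fun _ hd => mem_headSlice.2 fun b _ => mem_headSlice.1 hd b (mem_univ b)

lemma headSlice_subset_tails_union (D : Finset (Fin (n + 1) → Fin 2)) (a : Fin 3) :
    headSlice D a ⊆ tails D 0 ∪ tails D 1 := by
  intro d hd
  obtain ⟨b, hb⟩ := letterCube_nonempty a
  have hdb := mem_headSlice.1 hd b hb
  fin_cases b <;> simp_all

lemma headSlice_inter_subset_tails_inter (D : Finset (Fin (n + 1) → Fin 2)) {a a' : Fin 3}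
    (ha : a ≠ a') : headSlice D a ∩ headSlice D a' ⊆ tails D 0 ∩ tails D 1 := by
  intro d hd
  rw [mem_inter] at hd
  have hdc (c : Fin 2) : d ∈ tails D c :=
    (mem_letterCube_or_mem_letterCube a a' ha c).elim (mem_headSlice.1 hd.1 c)
      (mem_headSlice.1 hd.2 c)
  exact mem_inter.2 ⟨hdc 0, hdc 1⟩

lemma card_add_card_le_of_disjoint {D : Finset (Fin (n + 1) → Fin 2)} {X Y : Finset (Fin n → Fin 2)}
    {L L' : Finset (Fin 3)} (hLL' : Disjoint L L') (hX : X ⊆ L.biUnion (headSlice D))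
    (hY : Y ⊆ L'.biUnion (headSlice D)) : #X + #Y ≤ #D := by
  have hunion : X ∪ Y ⊆ tails D 0 ∪ tails D 1 :=
    union_subset (hX.trans (biUnion_subset.2 fun a _ => headSlice_subset_tails_union D a))
      (hY.trans (biUnion_subset.2 fun a _ => headSlice_subset_tails_union D a))
  have hinter : X ∩ Y ⊆ tails D 0 ∩ tails D 1 := by
    intro d hd
    obtain ⟨a, haL, ha⟩ := mem_biUnion.1 (hX (mem_inter.1 hd).1)
    obtain ⟨a', haL', ha'⟩ := mem_biUnion.1 (hY (mem_inter.1 hd).2)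
    have hne : a ≠ a' := fun h => disjoint_left.1 hLL' haL (h ▸ haL')
    exact headSlice_inter_subset_tails_inter D hne (mem_inter.2 ⟨ha, ha'⟩)
  calc #X + #Y = #(X ∪ Y) + #(X ∩ Y) := (card_union_add_card_inter X Y).symm
    _ ≤ #(tails D 0 ∪ tails D 1) + #(tails D 0 ∩ tails D 1) :=
      add_le_add (card_le_card hunion) (card_le_card hinter)
    _ = #D := by rw [card_union_add_card_inter, card_eq_sum_card_tails D, Fin.sum_univ_two]

lemma card_le_card_of_forall_cube_subset_of_fin_zero {D : Finset (Fin 0 → Fin 2)}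
    {T : Finset (Fin 0 → Fin 3)} (hT : ∀ x ∈ T, cube x ⊆ D) : #T ≤ #D := by
  obtain rfl | ⟨x, hx⟩ := T.eq_empty_or_nonempty
  · simp
  · exact (card_le_one_of_subsingleton T).trans ((cube_nonempty x).mono (hT x hx)).card_pos

end Cubes

def CubeBound (G : SimpleGraph (Fin 3)) (K : ℝ) : Prop :=
  ∀ {n} {D : Finset (Fin n → Fin 2)} {T : Finset (Fin n → Fin 3)},
    (T : Set (Fin n → Fin 3)).Pairwise (Distinguishable G) → (∀ x ∈ T, cube x ⊆ D) →
      (#T : ℝ) ^ K ≤ #D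

section CliqueCover
variable {G : SimpleGraph (Fin 3)} {n : ℕ}

lemma card_filter_le_of_isClique
    (ih : ∀ {D : Finset (Fin n → Fin 2)} {T : Finset (Fin n → Fin 3)},
      (T : Set (Fin n → Fin 3)).Pairwise (Distinguishable G) → (∀ x ∈ T, cube x ⊆ D) → #T ≤ #D)
    {M : Finset (Fin 3)} (hM : G.IsClique (M : Set (Fin 3)))
    {D : Finset (Fin (n + 1) → Fin 2)} {T : Finset (Fin (n + 1) → Fin 3)}
    (hT : (T : Set (Fin (n + 1) → Fin 3)).Pairwise (Distinguishable G))
    (hcube : ∀ x ∈ T, cube x ⊆ D) :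
    #(T.filter (· 0 ∈ M)) ≤ #(M.biUnion (headSlice D)) := by
  have htail : ∀ x ∈ T.filter (· 0 ∈ M), ∀ y ∈ T.filter (· 0 ∈ M), x ≠ y →
      Distinguishable G (Fin.tail x) (Fin.tail y) := by
    intro x hx y hy hxy
    rw [mem_filter] at hx hy
    exact (hT hx.1 hy.1 hxy).tail hM hx.2 hy.2
  rw [← card_image_of_injOn fun x hx y hy h => by_contra fun hxy => (htail x hx y hy hxy).ne h]
  refine ih ?_ fun x' hx' => ?_
  · simp only [coe_image, Set.Pairwise, Set.mem_image, mem_coe]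
    rintro _ ⟨x, hx, rfl⟩ _ ⟨y, hy, rfl⟩ hxy
    exact htail x hx y hy fun h => hxy (h ▸ rfl)
  · obtain ⟨x, hx, rfl⟩ := mem_image.1 hx'
    rw [mem_filter] at hx
    have hx₀ := hcube x hx.1
    rw [← Fin.cons_self_tail x, cube_cons_subset_iff] at hx₀
    exact hx₀.trans (subset_biUnion_of_mem (headSlice D) hx.2)

theorem card_le_card_of_isClique_compl {L : Finset (Fin 3)} (hL : G.IsClique (L : Set (Fin 3)))
    (hLc : G.IsClique ((Lᶜ : Finset (Fin 3)) : Set (Fin 3))) :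
    ∀ {n} {D : Finset (Fin n → Fin 2)} {T : Finset (Fin n → Fin 3)},
      (T : Set (Fin n → Fin 3)).Pairwise (Distinguishable G) → (∀ x ∈ T, cube x ⊆ D) → #T ≤ #D
  | 0, _, _, _, hcube => card_le_card_of_forall_cube_subset_of_fin_zero hcube
  | n + 1, D, T, hT, hcube => by
    have ih := @card_le_card_of_isClique_compl L hL hLc n
    calc #T = #(T.filter (· 0 ∈ L)) + #(T.filter (· 0 ∈ Lᶜ)) := by
          simp only [mem_compl]
          exact (card_filter_add_card_filter_not _).symm
      _ ≤ #(L.biUnion (headSlice D)) + #(Lᶜ.biUnion (headSlice D)) :=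
          add_le_add (card_filter_le_of_isClique ih hL hT hcube)
            (card_filter_le_of_isClique ih hLc hT hcube)
      _ ≤ #D := card_add_card_le_of_disjoint disjoint_compl_right subset_rfl subset_rfl

lemma cubeBound_one_of_adj {u v : Fin 3} (huv : G.Adj u v) : CubeBound G 1 := by
  intro n D T hT hcube
  obtain ⟨w, hw⟩ := card_eq_one.1 (by
    rw [card_compl, Fintype.card_fin, card_pair huv.ne] : #({u, v}ᶜ : Finset (Fin 3)) = 1)
  rw [Real.rpow_one]
  refine Nat.cast_le.2 (card_le_card_of_isClique_compl (L := {u, v}) ?_ ?_ hT hcube)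
  · rw [coe_pair]
    exact G.isClique_pair.2 fun _ => huv
  · rw [hw, coe_singleton]
    exact G.isClique_singleton w

end CliqueCover

lemma ConcaveOn.map_add_map_le_of_add_eq {s : Set ℝ} {f : ℝ → ℝ} (hf : ConcaveOn ℝ s f)
    {a b c d : ℝ} (ha : a ∈ s) (hb : b ∈ s) (hac : a ≤ c) (hcb : c ≤ b) (hsum : c + d = a + b) :
    f a + f b ≤ f c + f d := by
  obtain hab | hab := (hac.trans hcb).eq_or_lt
  · obtain rfl : c = a := le_antisymm (hab ▸ hcb) hac
    rw [show d = b by linarith]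
  obtain rfl : d = a + b - c := by linarith
  set μ := (b - c) / (b - a)
  have hba : 0 < b - a := by linarith
  have hμ₀ : 0 ≤ μ := div_nonneg (by linarith) hba.le
  have hμ₁ : 0 ≤ 1 - μ := by rw [sub_nonneg, div_le_one hba]; linarith
  have hc : μ • a + (1 - μ) • b = c := by simp only [smul_eq_mul, μ]; field_simp; ring
  have hd : (1 - μ) • a + μ • b = a + b - c := by simp only [smul_eq_mul, μ]; field_simp; ring
  have h₁ := hf.2 ha hb hμ₀ hμ₁ (by ring)
  have h₂ := hf.2 ha hb hμ₁ hμ₀ (by ring)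
  rw [hc] at h₁
  rw [hd] at h₂
  simp only [smul_eq_mul] at h₁ h₂
  linarith

lemma logb_three_two_pos : 0 < Real.logb 3 2 := Real.logb_pos (by norm_num) (by norm_num)

/-- Equality holds at `a = s = t`; this is what singles out the exponent `log₃ 2`. -/
lemma add_add_rpow_logb_three_two_le {a s t : ℝ} (ha : 0 ≤ a) (has : a ≤ s) (hat : a ≤ t) :
    (a + s + t) ^ Real.logb 3 2 ≤ s ^ Real.logb 3 2 + t ^ Real.logb 3 2 := by
  wlog hst : s ≤ t generalizing s t
  · rw [add_right_comm, add_comm (s ^ _)]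
    exact this hat has (le_of_not_ge hst)
  set p := Real.logb 3 2
  have hp₁ : p ≤ 1 := by
    rw [← Real.logb_self_eq_one (b := 3) (by norm_num)]
    exact Real.logb_le_logb_of_le (by norm_num) (by norm_num) (by norm_num)
  have hs : 0 ≤ s := ha.trans has
  have hthree : (3 * s) ^ p = 2 * s ^ p := by
    rw [Real.mul_rpow (by norm_num) hs, Real.rpow_logb (by norm_num) (by norm_num) (by norm_num)]
  -- concavity: `s ^ p + (2 * s + t) ^ p ≤ t ^ p + (3 * s) ^ p`
  have hconc := (Real.concaveOn_rpow logb_three_two_pos.le hp₁).map_add_map_le_of_add_eq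
    (c := t) (d := 3 * s) (Set.mem_Ici.2 hs) (Set.mem_Ici.2 (by linarith : 0 ≤ 2 * s + t)) hst
    (by linarith) (by ring)
  have hmono : (a + s + t) ^ p ≤ (2 * s + t) ^ p :=
    Real.rpow_le_rpow (by linarith) (by linarith) logb_three_two_pos.le
  linarith

section Subcubes
variable {n : ℕ}

def subcubes (D : Finset (Fin n → Fin 2)) : Finset (Fin n → Fin 3) :=
  univ.filter fun x => cube x ⊆ D

lemma mem_subcubes {D : Finset (Fin n → Fin 2)} {x : Fin n → Fin 3} :
    x ∈ subcubes D ↔ cube x ⊆ D := by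
  simp [subcubes]

lemma subcubes_mono {D D' : Finset (Fin n → Fin 2)} (h : D ⊆ D') : subcubes D ⊆ subcubes D' :=
  fun _ hx => mem_subcubes.2 ((mem_subcubes.1 hx).trans h)

lemma tails_subcubes (D : Finset (Fin (n + 1) → Fin 2)) (a : Fin 3) :
    tails (subcubes D) a = subcubes (headSlice D a) := by
  ext x
  rw [mem_tails, mem_subcubes, mem_subcubes, cube_cons_subset_iff]

theorem card_subcubes_rpow_le : ∀ {n} (D : Finset (Fin n → Fin 2)),
    (#(subcubes D) : ℝ) ^ Real.logb 3 2 ≤ #D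
  | 0, D => by
    have hle : #(subcubes D) ≤ 1 := card_le_one_of_subsingleton _
    have hD : #(subcubes D) ≤ #D :=
      card_le_card_of_forall_cube_subset_of_fin_zero fun _ hx => mem_subcubes.1 hx
    interval_cases #(subcubes D)
    · simp [Real.zero_rpow logb_three_two_pos.ne']
    · simpa using hD
  | n + 1, D => by
    rw [card_eq_sum_card_tails, Fin.sum_univ_three, tails_subcubes, tails_subcubes, tails_subcubes]
    push_cast
    calc _ ≤ (#(subcubes (headSlice D 1)) : ℝ) ^ Real.logb 3 2
          + (#(subcubes (headSlice D 2)) : ℝ) ^ Real.logb 3 2 :=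
          add_add_rpow_logb_three_two_le (by positivity)
            (by exact_mod_cast card_le_card (subcubes_mono (headSlice_zero_subset D 1)))
            (by exact_mod_cast card_le_card (subcubes_mono (headSlice_zero_subset D 2)))
      _ ≤ #(headSlice D 1) + #(headSlice D 2) :=
          add_le_add (card_subcubes_rpow_le _) (card_subcubes_rpow_le _)
      _ ≤ #D := by
          exact_mod_cast card_add_card_le_of_disjoint (L := {1}) (L' := {2}) (by decide)
            (by simp) (by simp)

lemma cubeBound_logb_three_two (G : SimpleGraph (Fin 3)) : CubeBound G (Real.logb 3 2) := by
  intro n D T _ hcube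
  refine (Real.rpow_le_rpow (Nat.cast_nonneg _) ?_ logb_three_two_pos.le).trans
    (card_subcubes_rpow_le D)
  exact_mod_cast card_le_card fun x hx => mem_subcubes.2 (hcube x hx)

end Subcubes

section UserOne
variable {H : SimpleGraph (Fin 3)}
  (hH : ∀ a b : Fin 3, H.Adj a b ↔ (a = 0 ∧ b ≠ 0) ∨ (a ≠ 0 ∧ b = 0))
include hH

lemma disjoint_cube_of_distinguishable {n : ℕ} {x y : Fin n → Fin 3} (h : Distinguishable H x y) :
    Disjoint (cube x) (cube y) := by
  obtain ⟨t, hne, hnadj⟩ := h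
  have hdisj : ∀ a b : Fin 3, a ≠ b → ¬((a = 0 ∧ b ≠ 0) ∨ (a ≠ 0 ∧ b = 0)) →
      Disjoint (letterCube a) (letterCube b) := by decide
  rw [hH] at hnadj
  exact disjoint_left.2 fun d hx hy => disjoint_left.1 (hdisj _ _ hne hnadj)
    (Fintype.mem_piFinset.1 hx t) (Fintype.mem_piFinset.1 hy t)

lemma isIndepSet_range_one_two : H.IsIndepSet (Set.range ![1, 2]) := by
  rintro _ ⟨a, rfl⟩ _ ⟨b, rfl⟩ hab
  rw [hH]
  fin_cases a <;> fin_cases b <;> simp_all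

end UserOne

lemma mul_rpow_le_two_pow {G : Fin 2 → SimpleGraph (Fin 3)}
    (hG1 : ∀ a b : Fin 3, (G 0).Adj a b ↔ (a = 0 ∧ b ≠ 0) ∨ (a ≠ 0 ∧ b = 0)) {K : ℝ}
    (hbound : CubeBound (G 1) K) {m : Fin 2 → ℕ} {n : ℕ} (hfeas : FeasibleAtLength G m n) :
    (m 0 : ℝ) * (m 1 : ℝ) ^ K ≤ 2 ^ n := by
  obtain ⟨E, hE⟩ := hfeas
  let pair (a : Fin (m 0)) (b : Fin (m 1)) : ∀ i, Fin (m i) := Fin.cons a (Fin.cons b finZeroElim)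
  let D (a : Fin (m 0)) := univ.biUnion fun b => cube (E (pair a b))
  have hdisj : ((univ : Finset (Fin (m 0))) : Set (Fin (m 0))).PairwiseDisjoint D := by
    intro a _ a' _ ha
    refine (disjoint_biUnion_left _ _ _).2 fun b _ => (disjoint_biUnion_right _ _ _).2 fun b' _ =>
      ?_
    exact disjoint_cube_of_distinguishable hG1 (hE 0 (pair a b) (pair a' b') ha)
  have hD (a : Fin (m 0)) : (m 1 : ℝ) ^ K ≤ #(D a) := by
    have hinj : Injective fun b => E (pair a b) := fun b b' h =>
      by_contra fun hb => (show Distinguishable (G 1) _ _ from hE 1 (pair a b) (pair a b') hb).ne h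
    have h := hbound (T := univ.image fun b => E (pair a b)) (D := D a) ?_ ?_
    · rwa [card_image_of_injective _ hinj, card_univ, Fintype.card_fin] at h
    · simp only [coe_image, coe_univ, Set.image_univ]
      rintro _ ⟨b, rfl⟩ _ ⟨b', rfl⟩ hbb
      exact hE 1 (pair a b) (pair a b') fun h : b = b' => hbb (h ▸ rfl)
    · intro x hx
      obtain ⟨b, -, rfl⟩ := mem_image.1 hx
      exact subset_biUnion_of_mem (fun b => cube (E (pair a b))) (mem_univ b)
  calc (m 0 : ℝ) * (m 1 : ℝ) ^ K = ∑ _a : Fin (m 0), (m 1 : ℝ) ^ K := by simp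
    _ ≤ ∑ a, (#(D a) : ℝ) := sum_le_sum fun a _ => hD a
    _ = #(univ.biUnion D) := by rw [card_biUnion hdisj, Nat.cast_sum]
    _ ≤ 2 ^ n := by exact_mod_cast (card_le_univ _).trans_eq (by simp)

lemma optimalRate_of_cubeBound {G : Fin 2 → SimpleGraph (Fin 3)}
    (hG1 : ∀ a b : Fin 3, (G 0).Adj a b ↔ (a = 0 ∧ b ≠ 0) ∨ (a ≠ 0 ∧ b = 0))
    {q : ℕ} (hq : 0 < q) {ι : Fin q → Fin 3} (hι : Injective ι)
    (hind : (G 1).IsIndepSet (Set.range ι)) {K : ℝ} (hK : 0 < K) (hKq : K * Real.logb 2 q = 1)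
    (hbound : CubeBound (G 1) K) {α : ℝ} (hα : α ∈ Set.Icc (0 : ℝ) 1) :
    OptimalRate G ![α, (1 - α) * Real.logb 2 (shannonCapacity (G 1))] := by
  have hcap : shannonCapacity (G 1) = q := by
    refine shannonCapacity_eq_of_alphaN_eq_pow (alphaN_eq_pow hι hind fun n S hS => ?_)
    refine card_le_pow_of_rpow_le hq hK hKq ((hbound hS fun x _ => subset_univ (cube x)).trans ?_)
    simp
  have hR := feasibleRate_timeSharing two_pos hq (by decide) (isIndepSet_range_one_two hG1) hι hind
    hα
  rw [Nat.cast_ofNat, Real.logb_self_eq_one one_lt_two, mul_one] at hR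
  rw [hcap]
  refine optimalRate_of_add_mul_le_one hK hR ?_ fun R hR' =>
    hR'.add_mul_le_one fun n m => mul_rpow_le_two_pow hG1 hbound
  simp only [Matrix.cons_val_zero, Matrix.cons_val_one]
  linear_combination (1 - α) * hKq

/-- Proposition 15: over a three-letter alphabet `{σ₀, σ₁, σ₂}`, if user 1's confusion graph has
edge set `{σ₀σ₁, σ₀σ₂}` (he only distinguishes `σ₁` from `σ₂`) and user 2's graph is any graph
other than the complete graph, then for every `α ∈ [0,1]` the rate vector
`(α, (1−α) log₂ c(G₂))` is optimal (note `log₂ c(G₁) = 1`). -/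
theorem optimal_twoEdges_threeLetters (G : Fin 2 → SimpleGraph (Fin 3))
    (hG1 : ∀ a b : Fin 3, (G 0).Adj a b ↔ (a = 0 ∧ b ≠ 0) ∨ (a ≠ 0 ∧ b = 0))
    (hG2 : G 1 ≠ ⊤)
    (α : ℝ) (hα : α ∈ Set.Icc (0 : ℝ) 1) :
    OptimalRate G ![α, (1 - α) * Real.logb 2 (shannonCapacity (G 1))] := by
  by_cases hbot : G 1 = ⊥
  · refine optimalRate_of_cubeBound hG1 three_pos injective_id
      (by rw [hbot]; exact fun _ _ _ _ _ h => h) logb_three_two_pos ?_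
      (cubeBound_logb_three_two _) hα
    rw [Nat.cast_ofNat, Real.mul_logb (by norm_num) (by norm_num) (by norm_num),
      Real.logb_self_eq_one (by norm_num)]
  · obtain ⟨u, v, huv⟩ := SimpleGraph.ne_bot_iff_exists_adj.1 hbot
    obtain ⟨x, y, hxy, hnadj⟩ := SimpleGraph.ne_top_iff_exists_not_adj.1 hG2
    refine optimalRate_of_cubeBound hG1 two_pos (ι := ![x, y]) ?_ ?_ one_pos (by simp)
      (cubeBound_one_of_adj huv) hα
    · intro a b h
      fin_cases a <;> fin_cases b <;> simp_all
    · rintro _ ⟨a, rfl⟩ _ ⟨b, rfl⟩ hab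
      fin_cases a <;> fin_cases b <;> simp_all [SimpleGraph.adj_comm]
end

section
/- Let 2 ≤ d ≤ k be natural numbers with d ≤ (k+1)/2, let n be a positive integer, and let 𝒢 ⊆ Σ_k^n be a set of strings that is closed under letter replacement: for every g ∈ 𝒢, every coordinate t at which g_t = σ_i with i > d, and every j ∈ {1,…,k}, the string obtained from g by replacing its t-th letter with σ_j also lies in 𝒢. Let 𝒢' = 𝒢 ∩ Σ_d^n and let 𝒢'' = { f(g_1)f(g_2)⋯f(g_n) : g ∈ 𝒢 }, where f(σ_i) = σ_{max(i,d)}. Then either 𝒢' and 𝒢'' are both empty, or |𝒢''| ≤ (k − d + 1)^{log_d |𝒢'|}, i.e. log_{k−d+1} |𝒢''| ≤ log_d |𝒢'|. -/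
/-- The map `f(σ_i) = σ_{max(i,d)}`; letters are `0`-indexed, so `σ_i` is `(i − 1 : Fin k)`
and `f` sends the letter of value `v` to the letter of value `max v (d − 1)`. -/
def squash (k d : ℕ) (hdk : d ≤ k) (a : Fin k) : Fin k :=
  ⟨max a.val (d - 1), by have := a.isLt; omega⟩

/-! With `c = log_d (k - d + 1) ≥ 1` we show `|𝒢''| ≤ |𝒢'| ^ c` by induction on `n`. Split `𝒢`
by the first letter into the tails `S` of strings starting with a letter of `Σ_d` and the tails
`I` of the others. Both are again closed, and closedness lets the first letter of a string of
`I` be anything, so `I` lies in every slice of `𝒢` by first letter (in particular `I ⊆ S`).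
Since `f` sends all of `Σ_d` to `σ_d`, `|𝒢''| ≤ |S''| + (k - d) |I''|`, while
`|𝒢'| ≥ |S'| + (d - 1) |I'|`. As `d ^ c = k - d + 1`, the induction step reduces to
`s ^ c + (d ^ c - 1) i ^ c ≤ (s + (d - 1) i) ^ c` for `0 ≤ i ≤ s`, an instance of the
convexity of `x ↦ x ^ c`. Finally `|𝒢'| ^ c = (k - d + 1) ^ (log_d |𝒢'|)`, and when `𝒢'` is
empty the bound forces `𝒢''` to be empty. -/

open Finset

theorem ConvexOn.map_add_map_le_of_add_eq {s : Set ℝ} {f : ℝ → ℝ} (hf : ConvexOn ℝ s f)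
    {a b p q : ℝ} (ha : a ∈ s) (hb : b ∈ s) (hap : a ≤ p) (hpb : p ≤ b) (hpq : p + q = a + b) :
    f p + f q ≤ f a + f b := by
  rcases hap.trans hpb |>.eq_or_lt with rfl | hab
  · obtain rfl : p = a := le_antisymm hpb hap
    obtain rfl : q = p := by linarith
    rfl
  obtain rfl : q = a + b - p := by linarith
  -- `p` and `q` are the convex combinations of `a` and `b` with swapped weights
  set t := (p - a) / (b - a)
  have hba : 0 < b - a := sub_pos.2 hab
  have ht₀ : 0 ≤ t := div_nonneg (sub_nonneg.2 hap) hba.le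
  have ht₁ : 0 ≤ 1 - t := by
    rw [sub_nonneg, div_le_one hba]; linarith
  have hp := hf.2 ha hb ht₁ ht₀ (sub_add_cancel 1 t)
  have hq := hf.2 ha hb ht₀ ht₁ (add_sub_cancel t 1)
  have hp_eq : (1 - t) • a + t • b = p := by simp only [smul_eq_mul, t]; field_simp; ring
  have hq_eq : t • a + (1 - t) • b = a + b - p := by
    simp only [smul_eq_mul, t]; field_simp; ring
  rw [hp_eq] at hp
  rw [hq_eq] at hq
  simp only [smul_eq_mul] at hp hq
  linarith

theorem Real.rpow_add_mul_rpow_le {c r x y : ℝ} (hc : 1 ≤ c) (hr : 1 ≤ r) (hx : 0 ≤ x)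
    (hxy : x ≤ y) : y ^ c + (r ^ c - 1) * x ^ c ≤ (y + (r - 1) * x) ^ c := by
  have hw : 0 ≤ (r - 1) * x := mul_nonneg (sub_nonneg.2 hr) hx
  have h := (convexOn_rpow hc).map_add_map_le_of_add_eq (a := x) (b := y + (r - 1) * x)
    (p := r * x) (q := y) hx (by simp only [Set.mem_Ici]; linarith) (by nlinarith)
    (by nlinarith) (by ring)
  rw [Real.mul_rpow (by linarith) hx] at h
  linarith

theorem Real.rpow_logb_comm (b : ℝ) {x y : ℝ} (hx : 0 < x) (hy : 0 < y) :
    x ^ Real.logb b y = y ^ Real.logb b x := by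
  rw [Real.rpow_def_of_pos hx, Real.rpow_def_of_pos hy, Real.logb, Real.logb]
  ring_nf

theorem Finset.card_biUnion_add_card_mul_le {ι α : Type*} [DecidableEq α] (s : Finset ι)
    (F : ι → Finset α) {J : Finset α} (hJ : ∀ i ∈ s, J ⊆ F i) :
    #(s.biUnion F) + #s * #J ≤ ∑ i ∈ s, #(F i) + #J := by
  have hsum : ∑ i ∈ s, #(F i) = ∑ i ∈ s, #(F i \ J) + #s * #J := by
    rw [← smul_eq_mul, ← sum_const, ← sum_add_distrib]
    exact sum_congr rfl fun i hi => (card_sdiff_add_card_eq_card (hJ i hi)).symm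
  have hdiff : #(s.biUnion F \ J) ≤ ∑ i ∈ s, #(F i \ J) :=
    (card_le_card fun x => by simp only [mem_sdiff, mem_biUnion]; tauto).trans
      card_biUnion_le
  have := card_le_card_sdiff_add_card (s := s.biUnion F) (t := J)
  omega

section TailsWithHead

variable {α : Type*} [Fintype α] [DecidableEq α] {n : ℕ}

def tailsWithHead (𝒜 : Finset (Fin (n + 1) → α)) (a : α) : Finset (Fin n → α) :=
  {x | Fin.cons a x ∈ 𝒜}

@[simp]
theorem mem_tailsWithHead {𝒜 : Finset (Fin (n + 1) → α)} {a : α} {x : Fin n → α} :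
    x ∈ tailsWithHead 𝒜 a ↔ Fin.cons a x ∈ 𝒜 := by
  simp [tailsWithHead]

theorem card_eq_sum_card_tailsWithHead (𝒜 : Finset (Fin (n + 1) → α)) :
    #𝒜 = ∑ a, #(tailsWithHead 𝒜 a) := by
  rw [← card_sigma]
  refine card_nbij' (fun g => ⟨g 0, Fin.tail g⟩) (fun x => Fin.cons x.1 x.2) ?_ ?_ ?_ ?_
  · intro g hg
    simpa [Fin.cons_self_tail] using hg
  · rintro ⟨a, x⟩ hx
    simpa using hx
  · intro g _
    simp
  · rintro ⟨a, x⟩ _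
    simp

end TailsWithHead

section ReplaceClosed

variable {k d : ℕ}

def IsReplaceClosed {ι : Type*} [DecidableEq ι] (d : ℕ) (𝒜 : Finset (ι → Fin k)) : Prop :=
  ∀ g ∈ 𝒜, ∀ t, d ≤ (g t).val → ∀ j, Function.update g t j ∈ 𝒜

variable {n : ℕ}

def lowPart (d : ℕ) (𝒜 : Finset (Fin n → Fin k)) : Finset (Fin n → Fin k) :=
  𝒜.filter fun g => ∀ t, (g t).val < d

variable {𝒜 : Finset (Fin (n + 1) → Fin k)}

theorem isReplaceClosed_tailsWithHead (h : IsReplaceClosed d 𝒜) (a : Fin k) :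
    IsReplaceClosed d (tailsWithHead 𝒜 a) := by
  intro x hx t ht j
  rw [mem_tailsWithHead, Fin.cons_update]
  exact h _ (mem_tailsWithHead.1 hx) t.succ ht j

theorem IsReplaceClosed.biUnion {ι β : Type*} [Fintype ι] [DecidableEq ι] {s : Finset β}
    {F : β → Finset (ι → Fin k)} (h : ∀ b ∈ s, IsReplaceClosed d (F b)) :
    IsReplaceClosed d (s.biUnion F) := by
  intro g hg t ht j
  obtain ⟨b, hb, hgb⟩ := mem_biUnion.1 hg
  exact mem_biUnion.2 ⟨b, hb, h b hb g hgb t ht j⟩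

theorem IsReplaceClosed.tailsWithHead_subset_tailsWithHead (h : IsReplaceClosed d 𝒜) {a : Fin k}
    (ha : d ≤ a.val) (b : Fin k) : tailsWithHead 𝒜 a ⊆ tailsWithHead 𝒜 b := by
  intro x hx
  rw [mem_tailsWithHead, ← Fin.update_cons_zero (x := a)]
  exact h _ (mem_tailsWithHead.1 hx) 0 ha b

theorem tailsWithHead_lowPart {a : Fin k} (ha : a.val < d) :
    tailsWithHead (lowPart d 𝒜) a = lowPart d (tailsWithHead 𝒜 a) := by
  ext x
  simp [lowPart, Fin.forall_fin_succ, ha]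

end ReplaceClosed

section Squash

variable {k d n : ℕ}

theorem Fin.card_filter_le_val (hdk : d ≤ k) : #{a : Fin k | d ≤ a.val} = k - d := by
  have := card_filter_add_card_filter_not (s := univ) fun a : Fin k => a.val < d
  simp only [not_lt, Fin.card_filter_val_lt, card_univ, Fintype.card_fin] at this
  omega

def lowHeadTails (d : ℕ) (𝒜 : Finset (Fin (n + 1) → Fin k)) : Finset (Fin n → Fin k) :=
  ({a | a.val < d} : Finset (Fin k)).biUnion (tailsWithHead 𝒜)

def highHeadTails (d : ℕ) (𝒜 : Finset (Fin (n + 1) → Fin k)) : Finset (Fin n → Fin k) :=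
  ({a | d ≤ a.val} : Finset (Fin k)).biUnion (tailsWithHead 𝒜)

@[simp]
theorem mem_lowHeadTails {𝒜 : Finset (Fin (n + 1) → Fin k)} {x : Fin n → Fin k} :
    x ∈ lowHeadTails d 𝒜 ↔ ∃ a : Fin k, a.val < d ∧ Fin.cons a x ∈ 𝒜 := by
  simp [lowHeadTails]

@[simp]
theorem mem_highHeadTails {𝒜 : Finset (Fin (n + 1) → Fin k)} {x : Fin n → Fin k} :
    x ∈ highHeadTails d 𝒜 ↔ ∃ a : Fin k, d ≤ a.val ∧ Fin.cons a x ∈ 𝒜 := by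
  simp [highHeadTails]

theorem IsReplaceClosed.highHeadTails_subset_lowHeadTails {𝒜 : Finset (Fin (n + 1) → Fin k)}
    (h : IsReplaceClosed d 𝒜) (hd : 0 < d) (hdk : d ≤ k) :
    highHeadTails d 𝒜 ⊆ lowHeadTails d 𝒜 :=
  biUnion_subset.2 fun _ ha => (h.tailsWithHead_subset_tailsWithHead (mem_filter.1 ha).2
    ⟨0, hd.trans_le hdk⟩).trans (subset_biUnion_of_mem _ (by simpa using hd))

theorem image_squash_subset (hd : 0 < d) (hdk : d ≤ k) (𝒜 : Finset (Fin (n + 1) → Fin k)) :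
    𝒜.image (fun g => squash k d hdk ∘ g) ⊆
      ((lowHeadTails d 𝒜).image fun g => squash k d hdk ∘ g).image
          (Fin.cons ⟨d - 1, by omega⟩) ∪
        ({a | d ≤ a.val} : Finset (Fin k)).biUnion fun b =>
          ((highHeadTails d 𝒜).image fun g => squash k d hdk ∘ g).image (Fin.cons b) := by
  intro x hx
  obtain ⟨g, hg, rfl⟩ := mem_image.1 hx
  have hg' : Fin.cons (g 0) (Fin.tail g) ∈ 𝒜 := by rwa [Fin.cons_self_tail]
  rw [← Fin.cons_self_tail g, Fin.comp_cons, mem_union]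
  by_cases h0 : (g 0).val < d
  · have : squash k d hdk (g 0) = ⟨d - 1, by omega⟩ := by ext; simp [squash]; omega
    exact Or.inl <| mem_image.2
      ⟨_, mem_image_of_mem _ (mem_lowHeadTails.2 ⟨g 0, h0, hg'⟩), by rw [this]⟩
  · have : squash k d hdk (g 0) = g 0 := by ext; simp [squash]; omega
    refine Or.inr <| mem_biUnion.2 ⟨g 0, by simpa using h0, mem_image.2
      ⟨_, mem_image_of_mem _ (mem_highHeadTails.2 ⟨g 0, by omega, hg'⟩), by rw [this]⟩⟩

theorem card_image_squash_le_add (hd : 0 < d) (hdk : d ≤ k) (𝒜 : Finset (Fin (n + 1) → Fin k)) :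
    #(𝒜.image fun g => squash k d hdk ∘ g) ≤
      #((lowHeadTails d 𝒜).image fun g => squash k d hdk ∘ g) +
        (k - d) * #((highHeadTails d 𝒜).image fun g => squash k d hdk ∘ g) := by
  refine (card_le_card (image_squash_subset hd hdk 𝒜)).trans <| (card_union_le _ _).trans ?_
  rw [← Fin.card_filter_le_val hdk]
  exact add_le_add card_image_le (card_biUnion_le_card_mul _ _ _ fun _ _ => card_image_le)

theorem IsReplaceClosed.card_lowPart_lowHeadTails_add_le {𝒜 : Finset (Fin (n + 1) → Fin k)}
    (h : IsReplaceClosed d 𝒜) (hdk : d ≤ k) :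
    #(lowPart d (lowHeadTails d 𝒜)) + d * #(lowPart d (highHeadTails d 𝒜)) ≤
      #(lowPart d 𝒜) + #(lowPart d (highHeadTails d 𝒜)) := by
  set L : Finset (Fin k) := {a | a.val < d}
  have hL : #L = d := by simp [L, Fin.card_filter_val_lt, hdk]
  calc #(lowPart d (lowHeadTails d 𝒜)) + d * #(lowPart d (highHeadTails d 𝒜))
      = #(L.biUnion fun a => lowPart d (tailsWithHead 𝒜 a)) +
          #L * #(lowPart d (highHeadTails d 𝒜)) := by
        rw [hL, lowHeadTails, lowPart, filter_biUnion]; rfl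
    _ ≤ ∑ a ∈ L, #(lowPart d (tailsWithHead 𝒜 a)) + #(lowPart d (highHeadTails d 𝒜)) :=
        card_biUnion_add_card_mul_le _ _ fun a _ => filter_subset_filter _ <|
          biUnion_subset.2 fun _ hb => h.tailsWithHead_subset_tailsWithHead (mem_filter.1 hb).2 a
    _ = ∑ a ∈ L, #(tailsWithHead (lowPart d 𝒜) a) + #(lowPart d (highHeadTails d 𝒜)) := by
        rw [sum_congr rfl fun a ha => by rw [← tailsWithHead_lowPart (mem_filter.1 ha).2]]
    _ ≤ #(lowPart d 𝒜) + #(lowPart d (highHeadTails d 𝒜)) := by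
        rw [card_eq_sum_card_tailsWithHead (lowPart d 𝒜)]
        gcongr
        exact subset_univ L

theorem IsReplaceClosed.card_image_squash_le_rpow {𝒜 : Finset (Fin n → Fin k)}
    (h : IsReplaceClosed d 𝒜) (hd : 0 < d) (hdk : d ≤ k) {c : ℝ} (hc : 1 ≤ c)
    (hdc : (d : ℝ) ^ c = k - d + 1) :
    (#(𝒜.image fun g => squash k d hdk ∘ g) : ℝ) ≤ (#(lowPart d 𝒜) : ℝ) ^ c := by
  induction n with
  | zero =>
    have hlow : lowPart d 𝒜 = 𝒜 := filter_true_of_mem fun _ _ t => t.elim0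
    rw [hlow]
    refine (Nat.cast_le.2 card_image_le).trans ?_
    rcases Nat.eq_zero_or_pos #𝒜 with h0 | hpos
    · rw [h0, Nat.cast_zero]; positivity
    · exact Real.self_le_rpow_of_one_le (by exact_mod_cast hpos) hc
  | succ n ih =>
    set S := lowHeadTails d 𝒜
    set I := highHeadTails d 𝒜
    have hS := ih (𝒜 := S) (IsReplaceClosed.biUnion fun a _ => isReplaceClosed_tailsWithHead h a)
    have hI := ih (𝒜 := I) (IsReplaceClosed.biUnion fun a _ => isReplaceClosed_tailsWithHead h a)
    have hIS : (#(lowPart d I) : ℝ) ≤ #(lowPart d S) :=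
      Nat.cast_le.2 <| card_le_card <| filter_subset_filter _ <|
        h.highHeadTails_subset_lowHeadTails hd hdk
    have hupper : (#(𝒜.image fun g => squash k d hdk ∘ g) : ℝ) ≤
        #(S.image fun g => squash k d hdk ∘ g) +
          ((d : ℝ) ^ c - 1) * #(I.image fun g => squash k d hdk ∘ g) := by
      have := Nat.cast_le (α := ℝ).2 (card_image_squash_le_add hd hdk 𝒜)
      rwa [Nat.cast_add, Nat.cast_mul, Nat.cast_sub hdk, show (k : ℝ) - d = d ^ c - 1 by linarith]
        at this
    have hlower : (#(lowPart d S) : ℝ) + (d - 1) * #(lowPart d I) ≤ #(lowPart d 𝒜) := by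
      have := Nat.cast_le (α := ℝ).2 (h.card_lowPart_lowHeadTails_add_le hdk)
      push_cast at this
      linarith
    have hd1 : (1 : ℝ) ≤ d := by exact_mod_cast hd
    calc (#(𝒜.image fun g => squash k d hdk ∘ g) : ℝ)
        ≤ (#(lowPart d S) : ℝ) ^ c + ((d : ℝ) ^ c - 1) * (#(lowPart d I) : ℝ) ^ c := by
          have : (0 : ℝ) ≤ (d : ℝ) ^ c - 1 := by
            rw [sub_nonneg]; exact Real.one_le_rpow hd1 (by linarith)
          nlinarith
      _ ≤ ((#(lowPart d S) : ℝ) + (d - 1) * #(lowPart d I)) ^ c :=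
          Real.rpow_add_mul_rpow_le hc hd1 (Nat.cast_nonneg _) hIS
      _ ≤ (#(lowPart d 𝒜) : ℝ) ^ c := by gcongr

end Squash

theorem card_image_squash_le_general (k d n : ℕ) (hd : 2 ≤ d) (hdk : d ≤ k) (hhalf : 2 * d ≤ k + 1)
    (𝒢 : Finset (Fin n → Fin k))
    (hclosed : ∀ g ∈ 𝒢, ∀ t : Fin n, d ≤ (g t).val → ∀ j : Fin k,
      Function.update g t j ∈ 𝒢) :
    (𝒢.filter (fun g => ∀ t : Fin n, (g t).val < d) = ∅ ∧
        𝒢.image (fun g => squash k d hdk ∘ g) = ∅) ∨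
      (((𝒢.image (fun g => squash k d hdk ∘ g)).card : ℝ) ≤
        ((k - d + 1 : ℕ) : ℝ) ^
          Real.logb d ((𝒢.filter (fun g => ∀ t : Fin n, (g t).val < d)).card)) := by
  have hd1 : (1 : ℝ) < d := by exact_mod_cast hd
  have hK : (0 : ℝ) < (k - d + 1 : ℕ) := by positivity
  have hc : 1 ≤ Real.logb d ((k - d + 1 : ℕ) : ℝ) := by
    rw [Real.le_logb_iff_rpow_le hd1 hK, Real.rpow_one]
    exact_mod_cast (by omega : d ≤ k - d + 1)
  have hdc : (d : ℝ) ^ Real.logb d ((k - d + 1 : ℕ) : ℝ) = k - d + 1 := by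
    rw [Real.rpow_logb (by positivity) hd1.ne' hK]; push_cast [hdk]; ring
  have key := IsReplaceClosed.card_image_squash_le_rpow (𝒜 := 𝒢) hclosed (by omega) hdk hc hdc
  rcases (lowPart d 𝒢).eq_empty_or_nonempty with hempty | hne
  · refine Or.inl ⟨hempty, card_eq_zero.1 ?_⟩
    rw [hempty, card_empty, Nat.cast_zero, Real.zero_rpow (by linarith)] at key
    exact_mod_cast le_antisymm key (Nat.cast_nonneg _)
  · right
    rwa [Real.rpow_logb_comm _ hK (by exact_mod_cast hne.card_pos)]

/-- Lemma 12: letters of `Σ_k` are `0`-indexed, so `Σ_d` consists of the letters of value `< d`.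
Let `2 ≤ d ≤ (k+1)/2`, let `𝒢 ⊆ Σ_k^n` be closed under replacing any occurrence of a letter
`σ_i` with `i > d` (value `≥ d`) by an arbitrary letter, let `𝒢' = 𝒢 ∩ Σ_d^n` and let
`𝒢'' = {f ∘ g : g ∈ 𝒢}` where `f(σ_i) = σ_{max(i,d)}`. Then either `𝒢'` and `𝒢''` are both
empty or `|𝒢''| ≤ (k−d+1)^{log_d |𝒢'|}`. -/
theorem card_image_squash_le (k d n : ℕ) (hd : 2 ≤ d) (hdk : d ≤ k) (hhalf : 2 * d ≤ k + 1)
    (hn : 0 < n) (𝒢 : Finset (Fin n → Fin k))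
    (hclosed : ∀ g ∈ 𝒢, ∀ t : Fin n, d ≤ (g t).val → ∀ j : Fin k,
      Function.update g t j ∈ 𝒢) :
    (𝒢.filter (fun g => ∀ t : Fin n, (g t).val < d) = ∅ ∧
        𝒢.image (fun g => squash k d hdk ∘ g) = ∅) ∨
      (((𝒢.image (fun g => squash k d hdk ∘ g)).card : ℝ) ≤
        ((k - d + 1 : ℕ) : ℝ) ^
          Real.logb d ((𝒢.filter (fun g => ∀ t : Fin n, (g t).val < d)).card)) :=
  card_image_squash_le_general k d n hd hdk hhalf 𝒢 hclosed
end
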